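/- Mechanism 2 Nash-implements maxmin welfare: for every profile of nonempty true desired sets R̃_1,…,R̃_n, the induced game (where each agent's strategy is a tuple of reported sets and her payoff is her true utility for the resulting allocation) has at least one Nash equilibrium, and every Nash equilibrium strategy profile yields a maxmin-optimal allocation. -/

import Mathlib

open scoped Classical
open Real

namespace BandwidthAlloc

/-- A bid: `none` denotes the special bid β; `some r` denotes the real bid `r ≥ 0`. -/
abbrev Bid := Option NNReal

/-- Numeric value of a bid (β is treated as 0 in arithmetic). -/
noncomputable def bval (b : Bid) : ℝ := ((b.getD 0 : NNReal) : ℝ)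

/-- A bid is positive when it is neither 0 nor β. -/
def posBid (b : Bid) : Prop := 0 < bval b

/-- Utility of the bundle `xi` for an agent with desired set `Ri`: `min_{j ∈ Ri} xi j`. -/
noncomputable def bundleUtil {m : ℕ} (Ri : Finset (Fin m)) (xi : Fin m → ℝ) : ℝ :=
  sInf (xi '' (Ri : Set (Fin m)))

/-- Bandwidth-allocation utility of agent `i` under allocation `x`. -/
noncomputable def util {n m : ℕ} (R : Fin n → Finset (Fin m))
    (x : Fin n → Fin m → ℝ) (i : Fin n) : ℝ :=
  bundleUtil (R i) (x i)

/-- Weights: `w R i j = 1` iff `j ∈ R i`, else `0`. -/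
noncomputable def w {n m : ℕ} (R : Fin n → Finset (Fin m)) (i : Fin n) (j : Fin m) : ℝ :=
  if j ∈ R i then 1 else 0

/-- A valid (nonnegative, supply-respecting) allocation. -/
def validAlloc {n m : ℕ} (s : Fin m → ℝ) (x : Fin n → Fin m → ℝ) : Prop :=
  (∀ i j, 0 ≤ x i j) ∧ ∀ j, ∑ i, x i j ≤ s j

/-- CES welfare of the utility vector `v` (`ρ = 0` is Nash welfare; for `ρ < 0` a zero
utility yields welfare `0`, the limiting convention). -/
noncomputable def ces (ρ : ℝ) {n : ℕ} (v : Fin n → ℝ) : ℝ :=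
  if ρ = 0 then ∏ i, v i
  else if ρ < 0 ∧ ∃ i, v i = 0 then 0
  else (∑ i, v i ^ ρ) ^ (1 / ρ)

/-- `Ψ_ρ`: `x` is a valid allocation maximizing CES welfare among valid allocations. -/
def maxCES (ρ : ℝ) {n m : ℕ} (s : Fin m → ℝ) (R : Fin n → Finset (Fin m))
    (x : Fin n → Fin m → ℝ) : Prop :=
  validAlloc s x ∧ ∀ y, validAlloc s y → ces ρ (util R y) ≤ ces ρ (util R x)

/-- Constraint curve: continuous, normalized, strictly increasing, nonnegative on `[0,∞)`. -/
def IsConstraintCurve (f : ℝ → ℝ) : Prop :=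
  ContinuousOn f (Set.Ici 0) ∧ f 0 = 0 ∧ StrictMonoOn f (Set.Ici 0) ∧
    ∀ y ∈ Set.Ici (0 : ℝ), 0 ≤ f y

/-- `g` is identically zero on `[0,∞)`. -/
def zeroOn (g : ℝ → ℝ) : Prop := ∀ y ∈ Set.Ici (0 : ℝ), g y = 0

/-- Price curve: continuous, normalized, nonnegative, and either strictly increasing or
identically zero on `[0,∞)`. -/
def IsPriceCurve (g : ℝ → ℝ) : Prop :=
  ContinuousOn g (Set.Ici 0) ∧ g 0 = 0 ∧ (∀ y ∈ Set.Ici (0 : ℝ), 0 ≤ g y) ∧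
    (StrictMonoOn g (Set.Ici 0) ∨ zeroOn g)

/-- Cost of the bundle `xi` under price curves `g`. -/
noncomputable def cost {m : ℕ} (g : Fin m → ℝ → ℝ) (xi : Fin m → ℝ) : ℝ :=
  ∑ j, g j (xi j)

/-- `xi` is in the demand set of an agent with desired set `Ri` under price curves `g`. -/
def inDemand {m : ℕ} (g : Fin m → ℝ → ℝ) (Ri : Finset (Fin m)) (xi : Fin m → ℝ) : Prop :=
  (∀ j, 0 ≤ xi j) ∧ cost g xi ≤ 1 ∧
    ∀ yi : Fin m → ℝ, (∀ j, 0 ≤ yi j) → cost g yi ≤ 1 → bundleUtil Ri yi ≤ bundleUtil Ri xi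

/-- Price curve equilibrium. -/
def isPCE {n m : ℕ} (s : Fin m → ℝ) (R : Fin n → Finset (Fin m))
    (x : Fin n → Fin m → ℝ) (g : Fin m → ℝ → ℝ) : Prop :=
  (∀ i, inDemand g (R i) (x i)) ∧ (∀ j, ∑ i, x i j ≤ s j) ∧
    ∀ j, ¬ zeroOn (g j) → ∑ i, x i j = s j

/-- Step 1 of the ATP allocation rule: proportional sharing. -/
noncomputable def atp1 {n m : ℕ} (s : Fin m → ℝ) (b : Fin n → Fin m → Bid)
    (i : Fin n) (j : Fin m) : ℝ :=
  bval (b i j) / (∑ k, bval (b k j)) * s j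

/-- Steps 1–2 of the ATP allocation rule: goods with a positive bid are shared
proportionally; on a good where everyone bids `0` or `β`, an agent bidding `β` receives
as much as she receives of some fixed good on which she bids positively. -/
noncomputable def atp2 {n m : ℕ} (s : Fin m → ℝ) (b : Fin n → Fin m → Bid)
    (i : Fin n) (j : Fin m) : ℝ :=
  if ∃ k, posBid (b k j) then atp1 s b i j
  else if b i j = none then
    (if h : ∃ ℓ, posBid (b i ℓ) then atp1 s b i (Classical.choose h) else 0)
  else 0

/-- The full ATP allocation rule (steps 1–3): agents bidding `β` on an oversubscribed
step-2 good are penalized with the zero bundle. -/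
noncomputable def atp {n m : ℕ} (s : Fin m → ℝ) (b : Fin n → Fin m → Bid)
    (i : Fin n) (j : Fin m) : ℝ :=
  if ∃ ℓ, (¬ ∃ k, posBid (b k ℓ)) ∧ b i ℓ = none ∧ s ℓ < ∑ k, atp2 s b k ℓ then 0
  else atp2 s b i j

/-- Total bid-constraint cost `C_f(b_i)` of agent `i`'s bid vector. -/
noncomputable def bidCost {m : ℕ} (f : Fin m → ℝ → ℝ) (bi : Fin m → Bid) : ℝ :=
  ∑ j, f j (bval (bi j))

/-- A bid vector is feasible if it obeys the bid constraint `C_f(b_i) ≤ 1`. -/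
def feasibleBid {m : ℕ} (f : Fin m → ℝ → ℝ) (bi : Fin m → Bid) : Prop :=
  bidCost f bi ≤ 1

/-- `b` is a Nash equilibrium of `ATP(f)`: all bids are feasible and no agent can
strictly increase her utility by a unilateral feasible deviation. -/
def isNE {n m : ℕ} (s : Fin m → ℝ) (f : Fin m → ℝ → ℝ)
    (R : Fin n → Finset (Fin m)) (b : Fin n → Fin m → Bid) : Prop :=
  (∀ i, feasibleBid f (b i)) ∧
    ∀ (i : Fin n) (bi' : Fin m → Bid), feasibleBid f bi' →
      util R (atp s (Function.update b i bi')) i ≤ util R (atp s b) i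

/-- `NE_X(ATP(f))`: allocations arising from Nash equilibrium bid profiles. -/
def NEX {n m : ℕ} (s : Fin m → ℝ) (f : Fin m → ℝ → ℝ)
    (R : Fin n → Finset (Fin m)) : Set (Fin n → Fin m → ℝ) :=
  {x | ∃ b, isNE s f R b ∧ x = atp s b}

/-- `f` is homogeneous of degree `α` on the nonnegative reals. -/
def Homog (f : ℝ → ℝ) (α : ℝ) : Prop :=
  ∀ c ≥ (0 : ℝ), ∀ y ≥ (0 : ℝ), f (c * y) = c ^ α * f y

/-- `γ* = max {γ ≥ 0 : γ · Σ_i w_{ij} ≤ s_j for all j}` of Mechanism 1. -/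
noncomputable def gammaStar {n m : ℕ} (s : Fin m → ℝ) (R : Fin n → Finset (Fin m)) : ℝ :=
  sSup {γ : ℝ | 0 ≤ γ ∧ ∀ j, γ * ∑ i, w R i j ≤ s j}

/-- Mechanism 1: `x i j = γ* · w i j`. -/
noncomputable def mech1 {n m : ℕ} (s : Fin m → ℝ) (R : Fin n → Finset (Fin m)) :
    Fin n → Fin m → ℝ :=
  fun i j => gammaStar s R * w R i j

/-- `min_i u_i(x_i)`. -/
noncomputable def minUtil {n m : ℕ} (R : Fin n → Finset (Fin m))
    (x : Fin n → Fin m → ℝ) : ℝ :=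
  sInf (Set.range fun i => util R x i)

/-- `x` is maxmin-optimal: valid and attaining the maximum of `min_i u_i` over valid
allocations. -/
def maxminOptimal {n m : ℕ} (s : Fin m → ℝ) (R : Fin n → Finset (Fin m))
    (x : Fin n → Fin m → ℝ) : Prop :=
  validAlloc s x ∧ ∀ y, validAlloc s y → minUtil R y ≤ minUtil R x

/-- Mechanism 2: `P i k` is the set agent `i` claims agent `k` desires.
`eta P i = |{k : R_k(k) ≠ R_k(i)}|`. -/
noncomputable def eta {n m : ℕ} (P : Fin n → Fin n → Finset (Fin m)) (i : Fin n) : ℕ :=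
  (Finset.univ.filter fun k => P k k ≠ P i k).card

/-- Agent `i` is in `N̄`: for some `k`, `R_k(k) ⊊ R_k(i)`. -/
def inNbar {n m : ℕ} (P : Fin n → Fin n → Finset (Fin m)) (i : Fin n) : Prop :=
  ∃ k, P k k ⊂ P i k

/-- The penalty factor `α_i` of Mechanism 2. -/
noncomputable def alpha {n m : ℕ} (P : Fin n → Fin n → Finset (Fin m)) (i : Fin n) : ℝ :=
  if inNbar P i then 0 else 1 - (eta P i : ℝ) / n

/-- Effective reported sets of Mechanism 2: agents in `N̄` are replaced by `∅`. -/
noncomputable def effSets {n m : ℕ} (P : Fin n → Fin n → Finset (Fin m)) :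
    Fin n → Finset (Fin m) :=
  fun i => if inNbar P i then ∅ else P i i

/-- Mechanism 2: the allocation `x_i = α_i · y_i` where `y` is the Mechanism 1 outcome
on the effective sets. -/
noncomputable def mech2 {n m : ℕ} (s : Fin m → ℝ) (P : Fin n → Fin n → Finset (Fin m)) :
    Fin n → Fin m → ℝ :=
  fun i j => alpha P i * mech1 s (effSets P) i j

/-- A report profile `P` (where `P i k` is the set agent `i` claims agent `k` desires)
is a Nash equilibrium of Mechanism 2 w.r.t. true desired sets `Rt`: no agent can
strictly increase her true utility by unilaterally changing her report tuple. -/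
def isNE2 {n m : ℕ} (s : Fin m → ℝ) (Rt : Fin n → Finset (Fin m))
    (P : Fin n → Fin n → Finset (Fin m)) : Prop :=
  ∀ (i : Fin n) (Pi' : Fin n → Finset (Fin m)),
    util Rt (mech2 s (Function.update P i Pi')) i ≤ util Rt (mech2 s P) i

/-!
Under truthful reports nobody is penalized and every agent gets the rate `γ*(R̃)`. After a
deviation by `i`, either `i`'s effective set misses a good she wants (utility `0`), or it
contains `R̃_i` while everybody else keeps her true set; then all effective sets have grown,
which only lowers `γ*`, and `α_i ≤ 1`. So truth-telling is an equilibrium.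

At an equilibrium `P`, agent `i` can always endorse every other agent's self-report and claim
a set `T` for herself: she is then not in `N̄`, her penalty factor is `1`, and she gets the
rate `γ*` of the resulting sets. With `T = R̃_i` this rate is positive, so in equilibrium `i`
is not in `N̄` and reports a superset of `R̃_i`. With `T = R_i(i)` the sets do not change,
so `α_i = 1`, i.e. everybody agrees on the diagonal. Finally, if some agent `k` strictly
over-reports, she can report `R̃_k` instead; everybody else then claims a strict superset on
her behalf and lands in `N̄`, so `k` obtains at least `γ*(R̃)`. Hence every agent receives
`γ*` of the equilibrium sets, which is at least `γ*(R̃)`, and `γ*(R̃)` bounds the minimum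
utility of every valid allocation.
-/

section Rate

variable {n m : ℕ} {s : Fin m → ℝ} {R R' : Fin n → Finset (Fin m)}

lemma w_nonneg (R : Fin n → Finset (Fin m)) (i : Fin n) (j : Fin m) : 0 ≤ w R i j := by
  unfold w; split_ifs <;> norm_num

lemma w_le_one (R : Fin n → Finset (Fin m)) (i : Fin n) (j : Fin m) : w R i j ≤ 1 := by
  unfold w; split_ifs <;> norm_num

lemma w_of_mem {i : Fin n} {j : Fin m} (h : j ∈ R i) : w R i j = 1 := if_pos h

lemma w_of_not_mem {i : Fin n} {j : Fin m} (h : j ∉ R i) : w R i j = 0 := if_neg h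

lemma w_mono {i : Fin n} (h : R i ⊆ R' i) (j : Fin m) : w R i j ≤ w R' i j := by
  unfold w
  split_ifs with h₁ h₂ <;> first | exact absurd (h h₁) h₂ | norm_num

lemma sum_w_le_card (R : Fin n → Finset (Fin m)) (j : Fin m) : ∑ i, w R i j ≤ n := by
  simpa using Finset.sum_le_sum fun i (_ : i ∈ Finset.univ) => w_le_one R i j

lemma one_le_sum_w {i : Fin n} {j : Fin m} (h : j ∈ R i) : 1 ≤ ∑ k, w R k j :=
  w_of_mem h ▸ Finset.single_le_sum (fun k _ => w_nonneg R k j) (Finset.mem_univ i)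

def feasibleRates (s : Fin m → ℝ) (R : Fin n → Finset (Fin m)) : Set ℝ :=
  {γ : ℝ | 0 ≤ γ ∧ ∀ j, γ * ∑ i, w R i j ≤ s j}

lemma bddAbove_feasibleRates (hR : ∃ i, (R i).Nonempty) : BddAbove (feasibleRates s R) := by
  obtain ⟨i, j, hj⟩ := hR
  refine ⟨s j, fun γ hγ => ?_⟩
  calc γ = γ * 1 := (mul_one γ).symm
    _ ≤ γ * ∑ k, w R k j := mul_le_mul_of_nonneg_left (one_le_sum_w hj) hγ.1
    _ ≤ s j := hγ.2 j

lemma le_gammaStar (hR : ∃ i, (R i).Nonempty) {γ : ℝ} (hγ : γ ∈ feasibleRates s R) :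
    γ ≤ gammaStar s R :=
  le_csSup (bddAbove_feasibleRates hR) hγ

lemma gammaStar_nonneg (s : Fin m → ℝ) (R : Fin n → Finset (Fin m)) : 0 ≤ gammaStar s R :=
  Real.sSup_nonneg fun _ hγ => hγ.1

lemma gammaStar_mul_sum_w_le (hs : ∀ j, 0 ≤ s j) (R : Fin n → Finset (Fin m)) (j : Fin m) :
    gammaStar s R * ∑ i, w R i j ≤ s j := by
  rcases (Finset.sum_nonneg fun i _ => w_nonneg R i j).eq_or_lt with h | h
  · rw [← h, mul_zero]
    exact hs j
  · rw [← le_div_iff₀ h]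
    exact Real.sSup_le (fun γ hγ => (le_div_iff₀ h).2 (hγ.2 j)) (div_nonneg (hs j) h.le)

lemma gammaStar_pos (hs : ∀ j, 0 < s j) (hR : ∃ i, (R i).Nonempty) : 0 < gammaStar s R := by
  obtain ⟨i, j₀, hj₀⟩ := hR
  have hn : (0 : ℝ) < n := by exact_mod_cast i.pos
  set γ := Finset.univ.inf' ⟨j₀, Finset.mem_univ j₀⟩ fun j => s j / n
  have hγ : 0 < γ := (Finset.lt_inf'_iff _).2 fun j _ => div_pos (hs j) hn
  refine hγ.trans_le (le_gammaStar ⟨i, j₀, hj₀⟩ ⟨hγ.le, fun j => ?_⟩)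
  calc γ * ∑ i, w R i j ≤ γ * n := mul_le_mul_of_nonneg_left (sum_w_le_card R j) hγ.le
    _ ≤ s j / n * n :=
      mul_le_mul_of_nonneg_right (Finset.inf'_le _ (Finset.mem_univ j)) hn.le
    _ = s j := div_mul_cancel₀ (s j) hn.ne'

lemma gammaStar_le_of_forall_subset (h : ∀ i, R i ⊆ R' i) (hR : ∃ i, (R i).Nonempty) :
    gammaStar s R' ≤ gammaStar s R :=
  Real.sSup_le (fun _ hγ => le_gammaStar hR ⟨hγ.1, fun j =>
      (mul_le_mul_of_nonneg_left (Finset.sum_le_sum fun i _ => w_mono (h i) j) hγ.1).trans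
        (hγ.2 j)⟩)
    (gammaStar_nonneg s R)

end Rate

section Utility

variable {n m : ℕ} {s : Fin m → ℝ} {R : Fin n → Finset (Fin m)}

lemma bundleUtil_le {Ri : Finset (Fin m)} {xi : Fin m → ℝ} {j : Fin m} (hj : j ∈ Ri) :
    bundleUtil Ri xi ≤ xi j :=
  csInf_le (Ri.finite_toSet.image xi).bddBelow ⟨j, hj, rfl⟩

lemma le_bundleUtil {Ri : Finset (Fin m)} {xi : Fin m → ℝ} {c : ℝ} (hne : Ri.Nonempty)
    (h : ∀ j ∈ Ri, c ≤ xi j) : c ≤ bundleUtil Ri xi :=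
  le_csInf ((Finset.coe_nonempty.2 hne).image xi) (Set.forall_mem_image.2 h)

lemma bundleUtil_eq {Ri : Finset (Fin m)} {xi : Fin m → ℝ} {c : ℝ} (hne : Ri.Nonempty)
    (h : ∀ j ∈ Ri, xi j = c) : bundleUtil Ri xi = c := by
  obtain ⟨j, hj⟩ := hne
  exact le_antisymm ((bundleUtil_le hj).trans_eq (h j hj))
    (le_bundleUtil ⟨j, hj⟩ fun j hj => (h j hj).ge)

/-- Each agent holds at least `minUtil R z` of every good she wants, so this is a feasible
rate. -/
lemma minUtil_le_gammaStar [Nonempty (Fin n)] (hR : ∀ i, (R i).Nonempty)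
    {z : Fin n → Fin m → ℝ} (hz : validAlloc s z) : minUtil R z ≤ gammaStar s R := by
  have hle : ∀ i, minUtil R z ≤ util R z i := fun i =>
    ciInf_le (Set.finite_range _).bddBelow i
  have hnonneg : 0 ≤ minUtil R z := le_ciInf fun i => le_bundleUtil (hR i) fun j _ => hz.1 i j
  refine le_gammaStar ⟨Classical.arbitrary _, hR _⟩ ⟨hnonneg, fun j => ?_⟩
  rw [Finset.mul_sum]
  refine (Finset.sum_le_sum fun i _ => ?_).trans (hz.2 j)
  by_cases hj : j ∈ R i
  · rw [w_of_mem hj, mul_one]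
    exact (hle i).trans (bundleUtil_le hj)
  · rw [w_of_not_mem hj, mul_zero]
    exact hz.1 i j

lemma maxminOptimal_of_gammaStar_le (hR : ∀ i, (R i).Nonempty) {x : Fin n → Fin m → ℝ}
    (hx : validAlloc s x) (h : ∀ i, gammaStar s R ≤ util R x i) : maxminOptimal s R x := by
  refine ⟨hx, fun y hy => ?_⟩
  cases isEmpty_or_nonempty (Fin n)
  · simp [minUtil, Set.range_eq_empty]
  · exact (minUtil_le_gammaStar hR hy).trans (le_ciInf h)

end Utility

section Mechanism

variable {n m : ℕ} {s : Fin m → ℝ} {R : Fin n → Finset (Fin m)}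
  {P : Fin n → Fin n → Finset (Fin m)} {i : Fin n}

lemma eta_eq_zero_iff : eta P i = 0 ↔ ∀ k, P i k = P k k := by
  rw [eta, Finset.card_eq_zero, Finset.filter_eq_empty_iff]
  simp [eq_comm]

lemma eta_le_card (P : Fin n → Fin n → Finset (Fin m)) (i : Fin n) : eta P i ≤ n :=
  (Finset.card_filter_le _ _).trans_eq (Finset.card_fin n)

lemma not_inNbar_of_agrees (h : ∀ k, P i k = P k k) : ¬ inNbar P i := fun ⟨k, hk⟩ =>
  (h k ▸ hk).ne rfl

lemma alpha_nonneg (P : Fin n → Fin n → Finset (Fin m)) (i : Fin n) : 0 ≤ alpha P i := by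
  unfold alpha
  split_ifs
  · exact le_rfl
  · exact sub_nonneg.2 (div_le_one_of_le₀ (by exact_mod_cast eta_le_card P i) n.cast_nonneg)

lemma alpha_le_one (P : Fin n → Fin n → Finset (Fin m)) (i : Fin n) : alpha P i ≤ 1 := by
  unfold alpha
  split_ifs
  · exact zero_le_one
  · exact sub_le_self _ (by positivity)

lemma alpha_eq_one_iff : alpha P i = 1 ↔ ∀ k, P i k = P k k := by
  refine ⟨fun h => ?_, fun h => ?_⟩
  · have hN : ¬ inNbar P i := fun hN => by simp [alpha, hN] at h
    rw [alpha, if_neg hN, sub_eq_self, div_eq_zero_iff, Nat.cast_eq_zero, Nat.cast_eq_zero] at h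
    exact eta_eq_zero_iff.1 (h.resolve_right i.pos.ne')
  · rw [alpha, if_neg (not_inNbar_of_agrees h), eta_eq_zero_iff.2 h]
    simp

lemma effSets_of_inNbar (h : inNbar P i) : effSets P i = ∅ := if_pos h

lemma effSets_of_not_inNbar (h : ¬ inNbar P i) : effSets P i = P i i := if_neg h

lemma effSets_subset_diag (P : Fin n → Fin n → Finset (Fin m)) (i : Fin n) :
    effSets P i ⊆ P i i := by
  unfold effSets
  split_ifs
  · exact Finset.empty_subset _
  · exact subset_rfl

lemma util_mech2_of_subset (hne : (R i).Nonempty) (hsub : R i ⊆ effSets P i) :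
    util R (mech2 s P) i = alpha P i * gammaStar s (effSets P) :=
  bundleUtil_eq hne fun j hj => by simp [mech2, mech1, w_of_mem (hsub hj)]

lemma util_mech2_nonpos_of_not_subset (h : ¬ R i ⊆ effSets P i) :
    util R (mech2 s P) i ≤ 0 := by
  obtain ⟨j, hj, hj'⟩ := Finset.not_subset.1 h
  calc util R (mech2 s P) i ≤ mech2 s P i j := bundleUtil_le hj
    _ = 0 := by simp [mech2, mech1, w_of_not_mem hj']

lemma mech2_valid (hs : ∀ j, 0 ≤ s j) (P : Fin n → Fin n → Finset (Fin m)) :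
    validAlloc s (mech2 s P) := by
  have hy : ∀ i j, 0 ≤ mech1 s (effSets P) i j := fun i j =>
    mul_nonneg (gammaStar_nonneg _ _) (w_nonneg _ _ _)
  refine ⟨fun i j => mul_nonneg (alpha_nonneg P i) (hy i j), fun j => ?_⟩
  calc ∑ i, mech2 s P i j ≤ ∑ i, gammaStar s (effSets P) * w (effSets P) i j :=
        Finset.sum_le_sum fun i _ => mul_le_of_le_one_left (hy i j) (alpha_le_one P i)
    _ = gammaStar s (effSets P) * ∑ i, w (effSets P) i j := (Finset.mul_sum _ _ _).symm
    _ ≤ s j := gammaStar_mul_sum_w_le hs _ j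

end Mechanism

section Deviation

variable {n m : ℕ} {s : Fin m → ℝ} {R : Fin n → Finset (Fin m)}
  {P : Fin n → Fin n → Finset (Fin m)} {i : Fin n} {T : Finset (Fin m)}

/-- Agent `i` endorses every other agent's self-report and claims `T` for herself. -/
def consistentDeviation (P : Fin n → Fin n → Finset (Fin m)) (i : Fin n)
    (T : Finset (Fin m)) : Fin n → Fin n → Finset (Fin m) :=
  Function.update P i (Function.update (fun k => P k k) i T)

lemma consistentDeviation_agrees (P : Fin n → Fin n → Finset (Fin m)) (i : Fin n)
    (T : Finset (Fin m)) (k : Fin n) :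
    consistentDeviation P i T i k = consistentDeviation P i T k k := by
  rcases eq_or_ne k i with rfl | hk
  · rfl
  · simp [consistentDeviation, Function.update_of_ne hk]

lemma alpha_consistentDeviation : alpha (consistentDeviation P i T) i = 1 :=
  alpha_eq_one_iff.2 (consistentDeviation_agrees P i T)

lemma effSets_consistentDeviation_self : effSets (consistentDeviation P i T) i = T := by
  rw [effSets_of_not_inNbar (not_inNbar_of_agrees (consistentDeviation_agrees P i T))]
  simp [consistentDeviation]

lemma inNbar_consistentDeviation {j : Fin n} (hj : j ≠ i) (h : T ⊂ P j i) :
    inNbar (consistentDeviation P i T) j :=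
  ⟨i, by simpa [consistentDeviation, Function.update_of_ne hj] using h⟩

lemma effSets_consistentDeviation_diag (h : ¬ inNbar P i) :
    effSets (consistentDeviation P i (P i i)) = effSets P := by
  have hdiag : ∀ k, consistentDeviation P i (P i i) k k = P k k := fun k => by
    rcases eq_or_ne k i with rfl | hk
    · simp [consistentDeviation]
    · simp [consistentDeviation, Function.update_of_ne hk]
  funext k
  rcases eq_or_ne k i with rfl | hk
  · rw [effSets_consistentDeviation_self, effSets_of_not_inNbar h]
  · have hrow : consistentDeviation P i (P i i) k = P k := Function.update_of_ne hk _ _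
    have hN : inNbar (consistentDeviation P i (P i i)) k ↔ inNbar P k := by
      simp only [inNbar, hdiag, hrow]
    simp only [effSets, hN, hrow]

lemma util_consistentDeviation (hne : (R i).Nonempty) (hT : R i ⊆ T) :
    util R (mech2 s (consistentDeviation P i T)) i =
      gammaStar s (effSets (consistentDeviation P i T)) := by
  rw [util_mech2_of_subset hne (effSets_consistentDeviation_self ▸ hT),
    alpha_consistentDeviation, one_mul]

end Deviation

section Equilibrium

variable {n m : ℕ} {s : Fin m → ℝ} {Rt : Fin n → Finset (Fin m)}

lemma isNE2_truthful (hRt : ∀ i, (Rt i).Nonempty) : isNE2 s Rt fun _ => Rt := by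
  intro i R'
  have hE : effSets (fun _ : Fin n => Rt) = Rt :=
    funext fun k => effSets_of_not_inNbar (not_inNbar_of_agrees fun _ => rfl)
  have htruth : util Rt (mech2 s fun _ => Rt) i = gammaStar s Rt := by
    rw [util_mech2_of_subset (hRt i) (by rw [hE]), alpha_eq_one_iff.2 fun _ => rfl, hE, one_mul]
  rw [htruth]
  set Q := Function.update (fun _ => Rt) i R'
  by_cases hsub : Rt i ⊆ effSets Q i
  · have hdiag : ∀ k, Rt k ⊆ Q k k := fun k => by
      rcases eq_or_ne k i with rfl | hk
      · exact hsub.trans (effSets_subset_diag Q k)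
      · simp [Q, Function.update_of_ne hk]
    have hQ : ∀ k, Rt k ⊆ effSets Q k := fun k => by
      rcases eq_or_ne k i with rfl | hk
      · exact hsub
      · have hrow : Q k = Rt := Function.update_of_ne hk _ _
        rw [effSets_of_not_inNbar fun ⟨k', hk'⟩ => (hrow ▸ hk').not_subset (hdiag k'), hrow]
    calc util Rt (mech2 s Q) i = alpha Q i * gammaStar s (effSets Q) :=
          util_mech2_of_subset (hRt i) hsub
      _ ≤ gammaStar s (effSets Q) :=
          mul_le_of_le_one_left (gammaStar_nonneg _ _) (alpha_le_one Q i)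
      _ ≤ gammaStar s Rt := gammaStar_le_of_forall_subset hQ ⟨i, hRt i⟩
  · exact (util_mech2_nonpos_of_not_subset hsub).trans (gammaStar_nonneg s Rt)

namespace isNE2

variable {P : Fin n → Fin n → Finset (Fin m)} (hNE : isNE2 s Rt P) (hRt : ∀ i, (Rt i).Nonempty)
include hNE hRt

lemma gammaStar_consistentDeviation_le {i : Fin n} {T : Finset (Fin m)} (hT : Rt i ⊆ T) :
    gammaStar s (effSets (consistentDeviation P i T)) ≤ util Rt (mech2 s P) i := by
  rw [← util_consistentDeviation (hRt i) hT]
  exact hNE i _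

variable (hs : ∀ j, 0 < s j)
include hs

lemma subset_effSets (i : Fin n) : Rt i ⊆ effSets P i := by
  by_contra h
  have hpos : 0 < gammaStar s (effSets (consistentDeviation P i (Rt i))) :=
    gammaStar_pos hs ⟨i, effSets_consistentDeviation_self ▸ hRt i⟩
  exact ((hpos.trans_le (hNE.gammaStar_consistentDeviation_le hRt subset_rfl)).trans_le
    (util_mech2_nonpos_of_not_subset h)).false

lemma not_inNbar (i : Fin n) : ¬ inNbar P i := fun h =>
  (hRt i).ne_empty (Finset.subset_empty.1 (effSets_of_inNbar h ▸ hNE.subset_effSets hRt hs i))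

lemma alpha_eq_one (i : Fin n) : alpha P i = 1 := by
  have hsub := hNE.subset_effSets hRt hs i
  have hN := hNE.not_inNbar hRt hs i
  have hpos : 0 < gammaStar s (effSets P) := gammaStar_pos hs ⟨i, (hRt i).mono hsub⟩
  have hdev := hNE.gammaStar_consistentDeviation_le hRt (effSets_of_not_inNbar hN ▸ hsub)
  rw [effSets_consistentDeviation_diag hN, util_mech2_of_subset (hRt i) hsub] at hdev
  exact le_antisymm (alpha_le_one P i) (le_of_mul_le_mul_right (by rwa [one_mul]) hpos)

lemma util_eq (i : Fin n) : util Rt (mech2 s P) i = gammaStar s (effSets P) := by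
  rw [util_mech2_of_subset (hRt i) (hNE.subset_effSets hRt hs i), hNE.alpha_eq_one hRt hs i,
    one_mul]

lemma gammaStar_le : gammaStar s Rt ≤ gammaStar s (effSets P) := by
  by_cases htruth : effSets P = Rt
  · rw [htruth]
  obtain ⟨k, hk⟩ := Function.ne_iff.1 htruth
  have hover : Rt k ⊂ P k k := by
    rw [← effSets_of_not_inNbar (hNE.not_inNbar hRt hs k)]
    exact ssubset_of_subset_of_ne (hNE.subset_effSets hRt hs k) (Ne.symm hk)
  have hQ : ∀ j, effSets (consistentDeviation P k (Rt k)) j ⊆ Rt j := fun j => by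
    rcases eq_or_ne j k with rfl | hj
    · rw [effSets_consistentDeviation_self]
    · have hagree : P j k = P k k := alpha_eq_one_iff.1 (hNE.alpha_eq_one hRt hs j) k
      rw [effSets_of_inNbar (inNbar_consistentDeviation hj (hagree ▸ hover))]
      exact Finset.empty_subset _
  calc gammaStar s Rt ≤ gammaStar s (effSets (consistentDeviation P k (Rt k))) :=
        gammaStar_le_of_forall_subset hQ ⟨k, effSets_consistentDeviation_self ▸ hRt k⟩
    _ ≤ util Rt (mech2 s P) k := hNE.gammaStar_consistentDeviation_le hRt subset_rfl
    _ = gammaStar s (effSets P) := hNE.util_eq hRt hs k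

end isNE2

end Equilibrium

/-- Mechanism 2 Nash-implements maxmin welfare: for every profile of
nonempty true desired sets, the induced game has at least one Nash equilibrium, and
every Nash equilibrium yields a maxmin-optimal allocation. -/
theorem mech2_nash_implements {n m : ℕ} (s : Fin m → ℝ) (hs : ∀ j, 0 < s j)
    (Rt : Fin n → Finset (Fin m)) (hRt : ∀ i, (Rt i).Nonempty) :
    (∃ P : Fin n → Fin n → Finset (Fin m), isNE2 s Rt P) ∧
      ∀ P : Fin n → Fin n → Finset (Fin m), isNE2 s Rt P →
        maxminOptimal s Rt (mech2 s P) :=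
  ⟨⟨_, isNE2_truthful hRt⟩, fun P hNE =>
    maxminOptimal_of_gammaStar_le hRt (mech2_valid (fun j => (hs j).le) P) fun i =>
      (hNE.gammaStar_le hRt hs).trans (hNE.util_eq hRt hs i).ge⟩

end BandwidthAlloc
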